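/- Let m ≥ 3, let x = (x_1,…,x_m), and fix integers 1 ≤ s_1 < s_2 < ⋯ < s_{m−1}. Define t^{(s_1,…,s_{m−1})}_i(x) = x_1 if i ≤ s_1, t^{(s_1,…,s_{m−1})}_i(x) = x_j if s_{j−1} < i ≤ s_j (for 2 ≤ j ≤ m−1), and t^{(s_1,…,s_{m−1})}_i(x) = x_m if i > s_{m−1}. Define polynomials c_{n,k}(x) in ℝ[x_1,…,x_m] by c_{0,0}(x) = 1, c_{n,k}(x) = 0 unless 0 ≤ k ≤ n, c_{n+1,0}(x) = (1 + x_1 + ⋯ + x_m)·c_{n,0}(x) + t^{(s_1,…,s_{m−1})}_1(x)·c_{n,1}(x), and c_{n+1,k}(x) = c_{n,k−1}(x) + (1 + x_1 + ⋯ + x_m)·c_{n,k}(x) + t^{(s_1,…,s_{m−1})}_{k+1}(x)·c_{n,k+1}(x) for 1 ≤ k ≤ n. Then for all such 1 ≤ s_1 < ⋯ < s_{m−1}, the sequence (c_{n,0}(x))_{n ≥ 0} is a Stieltjes moment sequence of polynomials, i.e., the Hankel matrix [c_{i+j,0}(x)]_{i,j ≥ 0} is x-totally positive. -/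

import Mathlib

/-!
The sequence is the first column of the Catalan-like triangle `c (n + 1) = c n ⬝ J`, where `J`
is the tridiagonal production matrix with `1` above the diagonal, `w = 1 + x₁ + ⋯ + x_m` on it
and `t (k + 1)` below it. Each `t (k + 1)` is one of the variables, so `t (k + 1)` and
`w - 1 - t (k + 1)` have nonnegative coefficients, and expanding minors of `J` along their first
row or column (`D = w D' - t D''`) shows inductively that `J` is coefficientwise totally
positive. The triangle is the row `e₀` stacked on top of `c ⬝ J`, so by Cauchy–Binet it is
totally positive as well, by induction on the number of rows. Finally `J` is self-adjoint for
the weights `Λ k = t 1 ⋯ t k`, which yields the factorisation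
`c (i + j) 0 = ∑ k, Λ k * c i k * c j k` of the Hankel matrix as `C Λ Cᵀ`, and Cauchy–Binet
applies once more.
-/

/-- A multivariable real polynomial is `x`-nonnegative if all of its coefficients
are nonnegative. -/
def PolyNonneg {m : ℕ} (f : MvPolynomial (Fin m) ℝ) : Prop :=
  ∀ d : Fin m →₀ ℕ, 0 ≤ f.coeff d

/-- An infinite matrix of multivariable real polynomials is `x`-totally positive if
every minor has all nonnegative coefficients. -/
def xTP {m : ℕ} (M : ℕ → ℕ → MvPolynomial (Fin m) ℝ) : Prop :=
  ∀ (k : ℕ) (r c : Fin k → ℕ), StrictMono r → StrictMono c →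
    PolyNonneg (Matrix.det (Matrix.of fun i j => M (r i) (c j)))

open Finset Filter

namespace Matrix

variable {R : Type*} [CommRing R] {p : ℕ} {n : Type*} [Fintype n]

theorem det_mul_eq_sum_prod_mul_det (A : Matrix (Fin p) n R) (B : Matrix n (Fin p) R) :
    (A * B).det = ∑ f : Fin p → n, (∏ i, A i (f i)) * (B.submatrix f id).det := by
  have hrows : (A * B).det = detRowAlternating.toMultilinearMap fun i => ∑ l, A i l • B l := by
    congr 1
    ext i j
    simp [mul_apply, Finset.sum_apply]
  rw [hrows, MultilinearMap.map_sum]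
  refine sum_congr rfl fun f _ => ?_
  rw [MultilinearMap.map_smul_univ, smul_eq_mul]
  rfl

open Classical in
/-- The Cauchy–Binet formula. -/
theorem det_mul_eq_sum_strictMono [LinearOrder n] (A : Matrix (Fin p) n R)
    (B : Matrix n (Fin p) R) :
    (A * B).det = ∑ g ∈ univ.filter (StrictMono : (Fin p → n) → Prop),
      (A.submatrix id g).det * (B.submatrix g id).det := by
  set F : (Fin p → n) → R := fun f => (∏ i, A i (f i)) * (B.submatrix f id).det
  have hinj : ∑ f, F f = ∑ f ∈ univ.filter Function.Injective, F f := by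
    refine (sum_filter_of_ne fun f _ hf => ?_).symm
    by_contra hninj
    obtain ⟨i, j, hij, hne⟩ := Function.not_injective_iff.1 hninj
    refine hf (mul_eq_zero_of_right _ (det_zero_of_row_eq hne ?_))
    ext k
    simp [hij]
  have hfactor : ∑ f ∈ univ.filter Function.Injective, F f =
      ∑ gσ ∈ univ.filter (StrictMono : (Fin p → n) → Prop) ×ˢ
        (univ : Finset (Equiv.Perm (Fin p))), F (gσ.1 ∘ gσ.2) := by
    symm
    refine sum_nbij' (fun gσ => gσ.1 ∘ gσ.2)
      (fun f => (f ∘ Tuple.sort f, (Tuple.sort f)⁻¹)) ?_ ?_ ?_ ?_ (fun _ _ => rfl)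
    · intro gσ h
      simp only [mem_product, mem_filter, mem_univ, true_and, and_true] at h ⊢
      exact h.injective.comp gσ.2.injective
    · intro f h
      simp only [mem_product, mem_filter, mem_univ, true_and, and_true] at h ⊢
      exact (Tuple.monotone_sort f).strictMono_of_injective (h.comp (Tuple.sort f).injective)
    · rintro ⟨g, σ⟩ h
      simp only [mem_product, mem_filter, mem_univ, true_and, and_true] at h
      have hsorted : (g ∘ σ) ∘ Tuple.sort (g ∘ σ) = g := by
        rw [Tuple.comp_perm_comp_sort_eq_comp_sort, Tuple.sort_eq_refl_iff_monotone.2 h.monotone]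
        rfl
      have hσ : Tuple.sort (g ∘ σ) = σ⁻¹ :=
        eq_inv_of_mul_eq_one_right (Equiv.ext fun i => h.injective (congrFun hsorted i))
      ext i <;> simp [hσ]
    · intro f _
      ext i
      simp
  have hperm (g : Fin p → n) : ∑ σ : Equiv.Perm (Fin p), F (g ∘ σ) =
      (A.submatrix id g).det * (B.submatrix g id).det := by
    rw [← det_transpose (A.submatrix id g), det_apply', sum_mul]
    refine sum_congr rfl fun σ _ => ?_
    change (∏ i, A i (g (σ i))) * ((B.submatrix g id).submatrix σ id).det = _
    rw [det_permute]
    simp only [transpose_apply, submatrix_apply, id]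
    ring
  rw [det_mul_eq_sum_prod_mul_det, hinj, hfactor, sum_product]
  exact sum_congr rfl fun g _ => hperm g

end Matrix

section Minors

variable {R : Type*} [CommRing R]

def minor (M : ℕ → ℕ → R) {k : ℕ} (r c : Fin k → ℕ) : R :=
  (Matrix.of fun i j => M (r i) (c j)).det

def MinorsMem (S : Subsemiring R) (M : ℕ → ℕ → R) : Prop :=
  ∀ (k : ℕ) (r c : Fin k → ℕ), StrictMono r → StrictMono c → minor M r c ∈ S

theorem StrictMono.fin_tail {α : Type*} [Preorder α] {k : ℕ} {r : Fin (k + 1) → α}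
    (hr : StrictMono r) : StrictMono (Fin.tail r) :=
  hr.comp Fin.strictMono_succ

section Expansion

variable {M : ℕ → ℕ → R} {k : ℕ}

theorem minor_succ_of_row_zero {r c : Fin (k + 1) → ℕ} (h : ∀ j ≠ 0, M (r 0) (c j) = 0) :
    minor M r c = M (r 0) (c 0) * minor M (Fin.tail r) (Fin.tail c) := by
  rw [minor, Matrix.det_succ_row_zero, Fin.sum_univ_succ, Finset.sum_eq_zero fun j _ => by
    simp [h j.succ (Fin.succ_ne_zero j)]]
  simp only [Fin.coe_ofNat_eq_mod, Nat.zero_mod, pow_zero, Matrix.of_apply, one_mul,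
    Fin.succAbove_zero, add_zero]
  rfl

theorem minor_succ_of_col_zero {r c : Fin (k + 1) → ℕ} (h : ∀ i ≠ 0, M (r i) (c 0) = 0) :
    minor M r c = M (r 0) (c 0) * minor M (Fin.tail r) (Fin.tail c) := by
  rw [minor, Matrix.det_succ_column_zero, Fin.sum_univ_succ, Finset.sum_eq_zero fun i _ => by
    simp [h i.succ (Fin.succ_ne_zero i)]]
  simp only [Fin.coe_ofNat_eq_mod, Nat.zero_mod, pow_zero, Matrix.of_apply, one_mul,
    Fin.succAbove_zero, add_zero]
  rfl

theorem minor_succ_succ_of_col_zero {r c : Fin (k + 2) → ℕ}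
    (h : ∀ i : Fin (k + 2), 2 ≤ (i : ℕ) → M (r i) (c 0) = 0) :
    minor M r c = M (r 0) (c 0) * minor M (Fin.tail r) (Fin.tail c)
      - M (r 1) (c 0) * minor M (r ∘ Fin.succAbove 1) (Fin.tail c) := by
  rw [minor, Matrix.det_succ_column_zero, Fin.sum_univ_succ, Fin.sum_univ_succ,
    Finset.sum_eq_zero fun i _ => by simp [h i.succ.succ (by simp)]]
  simp only [Fin.coe_ofNat_eq_mod, Nat.zero_mod, pow_zero, Matrix.of_apply, one_mul,
    Fin.succAbove_zero, Fin.succ_zero_eq_one, Nat.one_mod, pow_one, neg_mul, add_zero,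
    sub_eq_add_neg]
  rfl

end Expansion

namespace MinorsMem

variable {S : Subsemiring R} {A B M : ℕ → ℕ → R}

theorem of_eventually_eq_sum_mul (hA : MinorsMem S A) (hB : MinorsMem S B)
    (hM : ∀ i j, ∀ᶠ N in atTop, M i j = ∑ l ∈ Finset.range N, A i l * B l j) :
    MinorsMem S M := by
  intro k r c hr hc
  obtain ⟨N, hN⟩ := (eventually_all.2 fun i => eventually_all.2 fun j => hM (r i) (c j)).exists
  have hprod : Matrix.of (fun i j => M (r i) (c j)) =
      Matrix.of (fun i (l : Fin N) => A (r i) l) * Matrix.of fun (l : Fin N) j => B l (c j) := by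
    ext i j
    rw [Matrix.of_apply, hN i j, Matrix.mul_apply, ← Fin.sum_univ_eq_sum_range]
    rfl
  rw [minor, hprod, Matrix.det_mul_eq_sum_strictMono]
  refine Subsemiring.sum_mem _ fun g hg => Subsemiring.mul_mem _ ?_ ?_
  · exact hA k r _ hr (Fin.val_strictMono.comp (Finset.mem_filter.1 hg).2)
  · exact hB k _ c (Fin.val_strictMono.comp (Finset.mem_filter.1 hg).2) hc

theorem transpose (hM : MinorsMem S M) : MinorsMem S fun i j => M j i := by
  intro k r c hr hc
  rw [minor, ← Matrix.det_transpose]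
  exact hM k c r hc hr

theorem mul_col {v : ℕ → R} (hv : ∀ j, v j ∈ S) (hM : MinorsMem S M) :
    MinorsMem S fun i j => v j * M i j := by
  intro k r c hr hc
  have h := Matrix.det_mul_row (fun j => v (c j)) (Matrix.of fun i j => M (r i) (c j))
  simp only [Matrix.of_apply] at h
  rw [minor, h]
  exact Subsemiring.mul_mem _ (Subsemiring.prod_mem _ fun j _ => hv (c j)) (hM k r c hr hc)

end MinorsMem

def consSingleRow (B : ℕ → ℕ → R) : ℕ → ℕ → R
  | 0 => Pi.single 0 1
  | i + 1 => B i

theorem minorsMem_consSingleRow {S : Subsemiring R} {B : ℕ → ℕ → R} (hB : MinorsMem S B) :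
    MinorsMem S (consSingleRow B) := by
  have hpos {k : ℕ} (r c : Fin k → ℕ) (hr : StrictMono r) (hc : StrictMono c)
      (hr0 : ∀ i, r i ≠ 0) : minor (consSingleRow B) r c ∈ S := by
    have hshift : minor (consSingleRow B) r c = minor B (fun i => r i - 1) c := by
      unfold minor
      congr 2
      ext i j
      obtain ⟨n, hn⟩ := Nat.exists_eq_succ_of_ne_zero (hr0 i)
      simp [hn, consSingleRow]
    rw [hshift]
    exact hB _ _ _ (fun i j hij => by have := hr hij; have := hr0 i; omega) hc
  rintro (_ | k) r c hr hc
  · simp [minor]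
  by_cases hr0 : r 0 = 0
  · by_cases hc0 : c 0 = 0
    · rw [minor_succ_of_row_zero fun j hj => ?_]
      · simp only [hr0, hc0, consSingleRow, Pi.single_eq_same, one_mul]
        exact hpos (Fin.tail r) (Fin.tail c) hr.fin_tail
          hc.fin_tail fun i => Nat.ne_zero_of_lt (hr (Fin.succ_pos i))
      · rw [hr0]
        exact Pi.single_eq_of_ne (Nat.ne_zero_of_lt (hc (Fin.pos_of_ne_zero hj))) 1
    · rw [minor, Matrix.det_eq_zero_of_row_eq_zero 0 fun j => ?_]
      · exact S.zero_mem
      · rw [Matrix.of_apply, hr0]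
        exact Pi.single_eq_of_ne
          ((Nat.pos_of_ne_zero hc0).trans_le (hc.monotone (Fin.zero_le j))).ne' 1
  · exact hpos r c hr hc fun i => by have := hr.monotone (Fin.zero_le i); omega

def jacobi (s t : ℕ → R) (i j : ℕ) : R :=
  (if j = i + 1 then 1 else 0) + (if j = i then s i else 0) + (if i = j + 1 then t i else 0)

section Jacobi

variable {S : Subsemiring R} {s t : ℕ → R}

@[simp] theorem jacobi_self_succ (i : ℕ) : jacobi s t i (i + 1) = 1 := by
  simp [jacobi, show i ≠ i + 1 + 1 by omega]

@[simp] theorem jacobi_self (i : ℕ) : jacobi s t i i = s i := by simp [jacobi]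

@[simp] theorem jacobi_succ_self (j : ℕ) : jacobi s t (j + 1) j = t (j + 1) := by
  simp [jacobi, show j ≠ j + 1 + 1 by omega]

theorem jacobi_eq_zero {i j : ℕ} (h : i + 2 ≤ j ∨ j + 2 ≤ i) : jacobi s t i j = 0 := by
  simp only [jacobi]
  split_ifs <;> first | omega | simp

variable {k : ℕ} {r c : Fin (k + 1) → ℕ}

theorem minor_jacobi_of_lt (hc : StrictMono c) (h : r 0 < c 0) :
    minor (jacobi s t) r c =
      if c 0 = r 0 + 1 then minor (jacobi s t) (Fin.tail r) (Fin.tail c) else 0 := by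
  split_ifs with hadj
  · rw [minor_succ_of_row_zero fun j hj => jacobi_eq_zero (.inl ?_), hadj, jacobi_self_succ,
      one_mul]
    have := hc (Fin.pos_of_ne_zero hj)
    omega
  · refine Matrix.det_eq_zero_of_row_eq_zero 0 fun j => jacobi_eq_zero (.inl ?_)
    have := hc.monotone (Fin.zero_le j)
    omega

theorem minor_jacobi_of_gt (hr : StrictMono r) (h : c 0 < r 0) :
    minor (jacobi s t) r c =
      if r 0 = c 0 + 1 then t (r 0) * minor (jacobi s t) (Fin.tail r) (Fin.tail c) else 0 := by
  split_ifs with hadj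
  · rw [minor_succ_of_col_zero fun i hi => jacobi_eq_zero (.inr ?_), hadj, jacobi_succ_self]
    have := hr (Fin.pos_of_ne_zero hi)
    omega
  · refine Matrix.det_eq_zero_of_column_eq_zero 0 fun i => jacobi_eq_zero (.inr ?_)
    have := hr.monotone (Fin.zero_le i)
    omega

theorem minor_jacobi_of_eq {r c : Fin (k + 2) → ℕ} (hr : StrictMono r) (hc : StrictMono c)
    (h : r 0 = c 0) :
    minor (jacobi s t) r c = s (r 0) * minor (jacobi s t) (Fin.tail r) (Fin.tail c) -
      if r 1 = r 0 + 1 ∧ c 1 = c 0 + 1 then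
        t (r 1) * minor (jacobi s t) (Fin.tail (Fin.tail r)) (Fin.tail (Fin.tail c))
      else 0 := by
  have hr1 : r 0 < r 1 := hr Fin.zero_lt_one
  have hc1 : c 0 < c 1 := hc Fin.zero_lt_one
  split_ifs with hadj
  · rw [minor_succ_succ_of_col_zero fun i hi => jacobi_eq_zero (.inr ?_), h, jacobi_self,
      hadj.1, h, jacobi_succ_self]
    · congr 2
      rw [minor_succ_of_row_zero fun j hj => jacobi_eq_zero (.inl ?_)]
      · have htail : Fin.tail (r ∘ Fin.succAbove 1) = Fin.tail (Fin.tail r) := by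
          funext i
          simp [Fin.tail]
        rw [htail, show (r ∘ Fin.succAbove 1) 0 = c 0 from h,
          show Fin.tail c 0 = c 0 + 1 from hadj.2, jacobi_self_succ, one_mul]
      · have : c 1 < c j.succ := hc (Fin.succ_lt_succ_iff.2 (Fin.pos_of_ne_zero hj))
        change r 0 + 2 ≤ c j.succ
        omega
    · have := hr (show 1 < i from Fin.lt_def.2 (by rw [Fin.val_one]; omega))
      omega
  · rw [sub_zero]
    by_cases hr' : r 1 = r 0 + 1
    · rw [minor_succ_of_row_zero fun j hj => jacobi_eq_zero (.inl ?_), h, jacobi_self]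
      have := hc.monotone (Fin.one_le_of_ne_zero hj)
      omega
    · rw [minor_succ_of_col_zero fun i hi => jacobi_eq_zero (.inr ?_), h, jacobi_self]
      have := hr.monotone (Fin.one_le_of_ne_zero hi)
      omega

theorem minorsMem_jacobi (ht : ∀ k, t (k + 1) ∈ S) (hst : ∀ k, s k - 1 - t (k + 1) ∈ S) :
    MinorsMem S (jacobi s t) := by
  have hs (k : ℕ) : s k - 1 ∈ S := by simpa using S.add_mem (hst k) (ht k)
  -- For `r 0 = c 0`, the expansion `D = s D' - t D''` lands in `S` only via `D' - D'' ∈ S`.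
  suffices key : ∀ k, (∀ r c : Fin k → ℕ, StrictMono r → StrictMono c →
      minor (jacobi s t) r c ∈ S) ∧
      ∀ r c : Fin (k + 1) → ℕ, StrictMono r → StrictMono c → r 0 = c 0 →
        minor (jacobi s t) r c - minor (jacobi s t) (Fin.tail r) (Fin.tail c) ∈ S from
    fun k r c hr hc => (key k).1 r c hr hc
  intro k
  induction k with
  | zero =>
    refine ⟨fun r c _ _ => by simp [minor], fun r c _ _ h => ?_⟩
    simpa [minor, h] using hs (c 0)
  | succ k ih =>
    have hmem : ∀ r c : Fin (k + 1) → ℕ, StrictMono r → StrictMono c →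
        minor (jacobi s t) r c ∈ S := by
      intro r c hr hc
      have htail := ih.1 _ _ hr.fin_tail hc.fin_tail
      rcases lt_trichotomy (r 0) (c 0) with hlt | heq | hgt
      · rw [minor_jacobi_of_lt hc hlt]
        split_ifs
        exacts [htail, S.zero_mem]
      · simpa using S.add_mem (ih.2 r c hr hc heq) htail
      · rw [minor_jacobi_of_gt hr hgt]
        split_ifs with hadj
        exacts [hadj ▸ S.mul_mem (ht (c 0)) htail, S.zero_mem]
    refine ⟨hmem, fun r c hr hc h => ?_⟩
    have htail := hmem _ _ hr.fin_tail hc.fin_tail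
    rw [minor_jacobi_of_eq hr hc h]
    split_ifs with hadj
    · have hdiff := ih.2 (Fin.tail r) (Fin.tail c) hr.fin_tail
        hc.fin_tail (hadj.1.trans (h ▸ hadj.2.symm))
      rw [hadj.1]
      convert S.add_mem (S.mul_mem (hst (r 0)) htail) (S.mul_mem (ht (r 0)) hdiff) using 1
      ring
    · simpa [sub_one_mul] using S.mul_mem (hs (r 0)) htail

end Jacobi

def vecMulJacobi (s t f : ℕ → R) : ℕ → R
  | 0 => s 0 * f 0 + t 1 * f 1
  | k + 1 => f k + s (k + 1) * f (k + 1) + t (k + 2) * f (k + 2)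

def jacobiWeight (t : ℕ → R) (k : ℕ) : R :=
  ∏ u ∈ Finset.range k, t (u + 1)

section Step

variable {s t : ℕ → R}

theorem sum_range_mul_jacobi {N : ℕ} {f : ℕ → R} (hf : ∀ l, N ≤ l → f l = 0) (k : ℕ) :
    ∑ l ∈ range N, f l * jacobi s t l k = vecMulJacobi s t f k := by
  have hext (l : ℕ) (x : R) : (if l < N then f l * x else 0) = f l * x := by
    split_ifs with h
    · rfl
    · rw [hf l (not_lt.1 h), zero_mul]
  have hext₁ (l : ℕ) : (if l < N then f l else 0) = f l := by simpa using hext l 1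
  rcases k with _ | k <;>
    simp only [jacobi, vecMulJacobi, Nat.right_eq_add, Nat.add_eq_zero_iff,
      Nat.add_right_cancel_iff, one_ne_zero, and_false, ↓reduceIte, zero_add, mul_add, mul_ite,
      mul_one, mul_zero, sum_add_distrib, sum_ite_eq, sum_ite_eq', mem_range, hext, hext₁] <;>
    ring

theorem jacobiWeight_succ (k : ℕ) : jacobiWeight t (k + 1) = jacobiWeight t k * t (k + 1) :=
  prod_range_succ _ _

theorem sum_jacobiWeight_mul_vecMulJacobi_mul (u v : ℕ → R) (N : ℕ) :
    ∑ k ∈ range (N + 1), jacobiWeight t k * vecMulJacobi s t u k * v k =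
      ∑ k ∈ range (N + 1), jacobiWeight t k * s k * u k * v k +
        ∑ k ∈ range N, jacobiWeight t (k + 1) * (u k * v (k + 1) + u (k + 1) * v k) +
        jacobiWeight t (N + 1) * u (N + 1) * v N := by
  induction N with
  | zero =>
    simp only [zero_add, range_one, range_zero, sum_singleton, sum_empty, add_zero, jacobiWeight,
      prod_empty, prod_singleton, one_mul, vecMulJacobi]
    ring
  | succ N ih =>
    rw [sum_range_succ, ih]
    simp only [sum_range_succ, vecMulJacobi, jacobiWeight_succ (N + 1)]
    ring

theorem sum_jacobiWeight_mul_vecMulJacobi_mul_comm {u v : ℕ → R} {N : ℕ} (hu : u (N + 1) = 0)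
    (hv : v (N + 1) = 0) :
    ∑ k ∈ range (N + 1), jacobiWeight t k * vecMulJacobi s t u k * v k =
      ∑ k ∈ range (N + 1), jacobiWeight t k * u k * vecMulJacobi s t v k := by
  have hswap : ∑ k ∈ range (N + 1), jacobiWeight t k * u k * vecMulJacobi s t v k =
      ∑ k ∈ range (N + 1), jacobiWeight t k * vecMulJacobi s t v k * u k :=
    sum_congr rfl fun k _ => mul_right_comm _ _ _
  rw [hswap, sum_jacobiWeight_mul_vecMulJacobi_mul, sum_jacobiWeight_mul_vecMulJacobi_mul, hu, hv]
  simp only [mul_zero, zero_mul, add_zero]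
  congr 1
  exacts [sum_congr rfl fun k _ => mul_right_comm _ _ _, sum_congr rfl fun k _ => by ring]

end Step

section Catalan

variable {S : Subsemiring R} {s t : ℕ → R} {a : ℕ → ℕ → R}

theorem eq_sum_jacobiWeight_mul_mul (hlow : ∀ n k, n < k → a n k = 0) (h00 : a 0 0 = 1)
    (hstep : ∀ n, a (n + 1) = vecMulJacobi s t (a n)) {i j N : ℕ} (h : i + j ≤ N) :
    a (i + j) 0 = ∑ k ∈ range (N + 1), jacobiWeight t k * a i k * a j k := by
  induction j generalizing i with
  | zero =>
    rw [sum_eq_single 0 (fun k _ hk => by rw [hlow 0 k (Nat.pos_of_ne_zero hk), mul_zero])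
      (by simp)]
    simp [jacobiWeight, h00]
  | succ j ih =>
    rw [show i + (j + 1) = i + 1 + j by omega, ih (by omega), hstep i,
      sum_jacobiWeight_mul_vecMulJacobi_mul_comm (hlow i _ (by omega)) (hlow j _ (by omega)),
      ← hstep j]

theorem minorsMem_of_eq_vecMulJacobi (hJ : MinorsMem S (jacobi s t))
    (hlow : ∀ n k, n < k → a n k = 0) (h00 : a 0 0 = 1)
    (hstep : ∀ n, a (n + 1) = vecMulJacobi s t (a n)) : MinorsMem S a := by
  set T : ℕ → ℕ → ℕ → R := fun n i k => if i < n then a i k else 0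
  have hT : ∀ n, MinorsMem S (T n) := by
    intro n
    induction n with
    | zero =>
      rintro (_ | k) r c - -
      · simp [minor]
      · rw [minor, Matrix.det_eq_zero_of_row_eq_zero 0 fun j => by simp [T]]
        exact S.zero_mem
    | succ n ih =>
      have hcons : T (n + 1) = consSingleRow fun i k => if i < n then a (i + 1) k else 0 := by
        funext i k
        rcases i with _ | i
        · rcases k with _ | k
          · simp [T, consSingleRow, h00]
          · simp [T, consSingleRow, hlow 0 (k + 1) k.succ_pos]
        · simp [T, consSingleRow]
      rw [hcons]
      refine minorsMem_consSingleRow (ih.of_eventually_eq_sum_mul hJ fun i k => ?_)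
      filter_upwards [eventually_ge_atTop n] with N hN
      rw [sum_range_mul_jacobi fun l hl => ?_]
      · by_cases hi : i < n
        · simp [T, hi, hstep]
        · rcases k with _ | k <;> simp [T, hi, vecMulJacobi]
      · simp only [T]
        split_ifs with hi
        · exact hlow i l (by omega)
        · rfl
  intro k r c hr hc
  obtain ⟨n, hn⟩ := Finite.exists_le r
  have hminor : minor a r c = minor (T (n + 1)) r c := by
    simp [minor, T, Nat.lt_succ_of_le (hn _)]
  rw [hminor]
  exact hT (n + 1) k r c hr hc

end Catalan

theorem minorsMem_hankel_of_eq_vecMulJacobi {S : Subsemiring R} {s t : ℕ → R}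
    {a : ℕ → ℕ → R} (hJ : MinorsMem S (jacobi s t)) (ht : ∀ k, t (k + 1) ∈ S)
    (hlow : ∀ n k, n < k → a n k = 0) (h00 : a 0 0 = 1)
    (hstep : ∀ n, a (n + 1) = vecMulJacobi s t (a n)) :
    MinorsMem S fun i j => a (i + j) 0 := by
  have ha := minorsMem_of_eq_vecMulJacobi hJ hlow h00 hstep
  have hweight (k : ℕ) : jacobiWeight t k ∈ S := prod_mem fun u _ => ht u
  refine (ha.mul_col hweight).of_eventually_eq_sum_mul ha.transpose fun i j => ?_
  filter_upwards [eventually_ge_atTop (i + j + 1)] with N hN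
  obtain ⟨N, rfl⟩ : ∃ N', N = N' + 1 := ⟨N - 1, by omega⟩
  exact eq_sum_jacobiWeight_mul_mul hlow h00 hstep (by omega)

end Minors

def MvPolynomial.nonnegCoeffs (σ R : Type*) [CommSemiring R] [PartialOrder R] [IsOrderedRing R] :
    Subsemiring (MvPolynomial σ R) where
  carrier := {f | ∀ d, 0 ≤ f.coeff d}
  zero_mem' d := by simp
  one_mem' d := by
    classical
    rw [MvPolynomial.coeff_one]
    split_ifs <;> simp
  add_mem' hf hg d := by
    rw [MvPolynomial.coeff_add]
    exact add_nonneg (hf d) (hg d)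
  mul_mem' hf hg d := by
    classical
    rw [MvPolynomial.coeff_mul]
    exact Finset.sum_nonneg fun x _ => mul_nonneg (hf _) (hg _)

namespace MvPolynomial

variable {σ R : Type*} [CommRing R] [PartialOrder R] [IsOrderedRing R]

theorem X_mem_nonnegCoeffs (v : σ) : X v ∈ nonnegCoeffs σ R := fun d => by
  classical
  rw [coeff_X]
  split_ifs <;> simp

theorem one_add_sum_X_sub_one_sub_X_mem_nonnegCoeffs [Fintype σ] [DecidableEq σ] (v : σ) :
    1 + ∑ i, X i - 1 - X v ∈ nonnegCoeffs σ R := by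
  have h : 1 + ∑ i, X i - 1 - X v = ∑ i ∈ Finset.univ.erase v, (X i : MvPolynomial σ R) := by
    rw [Finset.sum_erase_eq_sub (Finset.mem_univ v)]
    ring
  rw [h]
  exact Subsemiring.sum_mem _ fun i _ => X_mem_nonnegCoeffs i

end MvPolynomial

theorem le_or_exists_mem_Ioc_or_lt (s : ℕ → ℕ) {n : ℕ} (hn : 1 ≤ n) (i : ℕ) :
    i ≤ s 1 ∨ (∃ j, 2 ≤ j ∧ j ≤ n ∧ i ∈ Set.Ioc (s (j - 1)) (s j)) ∨ s n < i := by
  by_cases hlast : s n < i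
  · exact .inr (.inr hlast)
  have hex : ∃ j, 1 ≤ j ∧ i ≤ s j := ⟨n, hn, not_lt.1 hlast⟩
  obtain ⟨hj1, hij⟩ := Nat.find_spec hex
  rcases hj1.eq_or_lt with h1 | h2
  · exact .inl (h1 ▸ hij)
  · have hprev := Nat.find_min hex (show Nat.find hex - 1 < Nat.find hex by omega)
    refine .inr (.inl ⟨Nat.find hex, h2, Nat.find_min' hex ⟨hn, not_lt.1 hlast⟩, ?_, hij⟩)
    exact not_le.1 fun h => hprev ⟨by omega, h⟩

/-- Example 3.3 (multivariable version): let `m ≥ 3`, fix thresholds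
`1 ≤ s 1 < s 2 < ⋯ < s (m-1)`, and let the down-step weight `t i` be `x_1` for
`i ≤ s 1`, `x_j` for `s (j-1) < i ≤ s j`, and `x_m` for `i > s (m-1)` (the
variable `x_j` is `MvPolynomial.X ⟨j-1, _⟩`).  Level-steps are weighted
`1 + x_1 + ⋯ + x_m`, up-steps `1`.  Then the resulting Catalan-like sequence
is a Stieltjes moment sequence of polynomials. -/
theorem example33_multivariable_stieltjes
    (m : ℕ) (hm : 3 ≤ m)
    (s : ℕ → ℕ)
    (t : ℕ → MvPolynomial (Fin m) ℝ)
    (ht1 : ∀ i, 1 ≤ i → i ≤ s 1 → t i = MvPolynomial.X ⟨0, by omega⟩)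
    (ht2 : ∀ j i, ∀ _ : 2 ≤ j, ∀ hjm : j ≤ m - 1, ∀ _ : s (j - 1) < i, ∀ _ : i ≤ s j,
      t i = MvPolynomial.X ⟨j - 1, by omega⟩)
    (ht3 : ∀ i, s (m - 1) < i → t i = MvPolynomial.X ⟨m - 1, by omega⟩)
    (c : ℕ → ℕ → MvPolynomial (Fin m) ℝ)
    (h00 : c 0 0 = 1)
    (hzero : ∀ n k, n < k → c n k = 0)
    (hrec0 : ∀ n, c (n + 1) 0 =
      (1 + ∑ i : Fin m, MvPolynomial.X i) * c n 0 + t 1 * c n 1)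
    (hrec : ∀ n k, c (n + 1) (k + 1) =
      c n k + (1 + ∑ i : Fin m, MvPolynomial.X i) * c n (k + 1)
        + t (k + 2) * c n (k + 2)) :
    xTP (fun i j => c (i + j) 0) := by
  have hX (k : ℕ) : ∃ v, t (k + 1) = MvPolynomial.X v := by
    rcases le_or_exists_mem_Ioc_or_lt s (n := m - 1) (by omega) (k + 1)
      with h | ⟨j, hj, hjm, hk⟩ | h
    exacts [⟨_, ht1 _ k.succ_pos h⟩, ⟨_, ht2 j _ hj hjm hk.1 hk.2⟩, ⟨_, ht3 _ h⟩]
  have ht (k : ℕ) : t (k + 1) ∈ MvPolynomial.nonnegCoeffs (Fin m) ℝ := by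
    obtain ⟨v, hv⟩ := hX k
    exact hv ▸ MvPolynomial.X_mem_nonnegCoeffs v
  have hst (k : ℕ) :
      1 + ∑ i, MvPolynomial.X i - 1 - t (k + 1) ∈ MvPolynomial.nonnegCoeffs (Fin m) ℝ := by
    obtain ⟨v, hv⟩ := hX k
    exact hv ▸ MvPolynomial.one_add_sum_X_sub_one_sub_X_mem_nonnegCoeffs v
  have hstep (n : ℕ) :
      c (n + 1) = vecMulJacobi (fun _ => 1 + ∑ i, MvPolynomial.X i) t (c n) := by
    funext k
    rcases k with _ | k
    exacts [hrec0 n, hrec n k]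
  -- `xTP M` unfolds to `MinorsMem (MvPolynomial.nonnegCoeffs (Fin m) ℝ) M`.
  exact minorsMem_hankel_of_eq_vecMulJacobi (minorsMem_jacobi ht hst) ht hzero h00 hstep
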